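/- Fix an integer N ≥ 2, a real R > 0, a real d with 0 < d ≤ √2·R, and a point C ∈ S whose last coordinate is c with 0 ≤ c ≤ R. Then the spherical cap {x ∈ S : ‖x − C‖ ≤ d} is entirely contained in the hemisphere {x ∈ S : x_N ≥ 0} if and only if d·√(1 − d²/(4R²)) ≤ c. -/

import Mathlib

/-!
After rescaling by `R⁻¹`, the cap is `{u : ‖u‖ = 1, a ≤ ⟪u, v⟫}` with `v = R⁻¹ • C` and
`a = 1 - d² / (2R²) ≥ 0`, and the hemisphere is `{u : 0 ≤ ⟪u, e⟫}`. With `a = cos α` and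
`b = ⟪v, e⟫ = cos β`, the cap lies in the hemisphere iff `α + β ≤ π / 2`, i.e. iff `1 ≤ a² + b²`.
Algebraically this is Cauchy–Schwarz for the components of `u` and `e` orthogonal to `v`,
`(⟪u, e⟫ - ⟪u, v⟫ b)² ≤ (1 - ⟪u, v⟫²)(1 - b²)`, whose equality case yields a point of the cap
below the equator when `a² + b² < 1`. Finally `1 ≤ a² + b²` unwinds to `d √(1 - d² / (4R²)) ≤ c`.
-/

open RealInnerProductSpace

theorem mul_sqrt_one_sub_div_le_iff {R d c : ℝ} (hR : 0 < R) (hd : 0 ≤ d) (hc : 0 ≤ c) :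
    d * √(1 - d ^ 2 / (4 * R ^ 2)) ≤ c ↔ 1 ≤ (1 - d ^ 2 / (2 * R ^ 2)) ^ 2 + (R⁻¹ * c) ^ 2 := by
  have : (1 - d ^ 2 / (2 * R ^ 2)) ^ 2 + (R⁻¹ * c) ^ 2 - 1
      = (c ^ 2 - d ^ 2 * (1 - d ^ 2 / (4 * R ^ 2))) / R ^ 2 := by
    field_simp; ring
  rw [← sub_nonneg (a := _ + _), this, le_div_iff₀ (by positivity), zero_mul, sub_nonneg,
    ← Real.sqrt_le_left hc, Real.sqrt_mul (sq_nonneg d), Real.sqrt_sq hd]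

section
variable {E : Type*} [NormedAddCommGroup E] [InnerProductSpace ℝ E]

theorem sq_inner_sub_inner_mul_inner_le {u v w : E} (hv : ‖v‖ = 1) :
    (⟪u, w⟫ - ⟪u, v⟫ * ⟪v, w⟫) ^ 2 ≤ (‖u‖ ^ 2 - ⟪u, v⟫ ^ 2) * (‖w‖ ^ 2 - ⟪v, w⟫ ^ 2) := by
  have hvv : ⟪v, v⟫ = 1 := by rw [real_inner_self_eq_norm_sq, hv, one_pow]
  have h := real_inner_mul_inner_self_le (u - ⟪u, v⟫ • v) (w - ⟪v, w⟫ • v)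
  simp only [inner_sub_left, inner_sub_right, real_inner_smul_left, real_inner_smul_right, hvv,
    real_inner_comm v] at h
  rw [← real_inner_self_eq_norm_sq, ← real_inner_self_eq_norm_sq, real_inner_comm v u]
  linear_combination h

theorem inner_nonneg_of_one_le_sq_add_sq {u v w : E} (hu : ‖u‖ = 1) (hv : ‖v‖ = 1)
    (hw : ‖w‖ = 1) (huv : 0 ≤ ⟪u, v⟫) (hvw : 0 ≤ ⟪v, w⟫) (h : 1 ≤ ⟪u, v⟫ ^ 2 + ⟪v, w⟫ ^ 2) :
    0 ≤ ⟪u, w⟫ := by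
  have gram := sq_inner_sub_inner_mul_inner_le (u := u) (w := w) hv
  rw [hu, hw] at gram
  nlinarith [mul_nonneg huv hvw]

theorem exists_norm_eq_one_inner_eq_inner_neg {v w : E} (hv : ‖v‖ = 1) (hw : ‖w‖ = 1)
    {a : ℝ} (h : a ^ 2 + ⟪v, w⟫ ^ 2 < 1) :
    ∃ u : E, ‖u‖ = 1 ∧ ⟪u, v⟫ = a ∧ ⟪u, w⟫ < 0 := by
  set b := ⟪v, w⟫
  have hvv : ⟪v, v⟫ = 1 := by rw [real_inner_self_eq_norm_sq, hv, one_pow]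
  have hww : ⟪w, w⟫ = 1 := by rw [real_inner_self_eq_norm_sq, hw, one_pow]
  have hb : 0 < 1 - b ^ 2 := by nlinarith
  -- `q` is the component of `w` orthogonal to `v`; `u` moves from `a • v` away from `w` along it.
  set q := w - b • v
  set s := √((1 - a ^ 2) / (1 - b ^ 2))
  have hs : s ^ 2 * (1 - b ^ 2) = 1 - a ^ 2 := by
    rw [Real.sq_sqrt (div_nonneg (by nlinarith) hb.le), div_mul_cancel₀ _ hb.ne']
  have hqv : ⟪q, v⟫ = 0 := by
    simp only [q, inner_sub_left, real_inner_smul_left, hvv, real_inner_comm v w, b]; ring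
  have hqw : ⟪q, w⟫ = 1 - b ^ 2 := by
    simp only [q, inner_sub_left, real_inner_smul_left, hww, b]; ring
  have hqq : ⟪q, q⟫ = 1 - b ^ 2 := by
    rw [inner_sub_right, real_inner_smul_right, hqw, hqv]; ring
  refine ⟨a • v - s • q, ?_, ?_, ?_⟩
  · rw [← sq_eq_sq₀ (norm_nonneg _) zero_le_one, one_pow, ← real_inner_self_eq_norm_sq]
    simp only [inner_sub_left, inner_sub_right, real_inner_smul_left, real_inner_smul_right, hvv,
      hqq, hqv, real_inner_comm q v]
    linear_combination hs
  · simp only [inner_sub_left, real_inner_smul_left, hvv, hqv]; ring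
  · have key : a * b < s * (1 - b ^ 2) :=
      lt_of_pow_lt_pow_left₀ 2 (by positivity) (by nlinarith)
    simp only [inner_sub_left, real_inner_smul_left, hqw]
    linarith

theorem forall_inner_nonneg_iff_one_le_sq_add_sq {v w : E} (hv : ‖v‖ = 1) (hw : ‖w‖ = 1)
    {a : ℝ} (ha : 0 ≤ a) (hvw : 0 ≤ ⟪v, w⟫) :
    (∀ u : E, ‖u‖ = 1 → a ≤ ⟪u, v⟫ → 0 ≤ ⟪u, w⟫) ↔ 1 ≤ a ^ 2 + ⟪v, w⟫ ^ 2 := by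
  constructor
  · intro h
    by_contra! hlt
    obtain ⟨u, hu, huv, huw⟩ := exists_norm_eq_one_inner_eq_inner_neg hv hw hlt
    exact (h u hu huv.ge).not_gt huw
  · intro h u hu hau
    have : a ^ 2 ≤ ⟪u, v⟫ ^ 2 := pow_le_pow_left₀ ha hau 2
    exact inner_nonneg_of_one_le_sq_add_sq hu hv hw (ha.trans hau) hvw (by linarith)

theorem norm_sub_le_iff_le_inner_inv_smul {x C : E} {R d : ℝ} (hR : 0 < R) (hx : ‖x‖ = R)
    (hC : ‖C‖ = R) (hd : 0 ≤ d) :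
    ‖x - C‖ ≤ d ↔ 1 - d ^ 2 / (2 * R ^ 2) ≤ ⟪R⁻¹ • x, R⁻¹ • C⟫ := by
  rw [real_inner_smul_left, real_inner_smul_right, ← pow_le_pow_iff_left₀ (norm_nonneg _) hd
    two_ne_zero, norm_sub_sq_real, hx, hC]
  have : R⁻¹ * (R⁻¹ * ⟪x, C⟫) - (1 - d ^ 2 / (2 * R ^ 2))
      = (d ^ 2 - (R ^ 2 - 2 * ⟪x, C⟫ + R ^ 2)) / (2 * R ^ 2) := by
    field_simp; ring
  rw [← sub_nonneg, ← sub_nonneg (a := R⁻¹ * _), this, le_div_iff₀ (by positivity), zero_mul]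

theorem sphere_cap_subset_hemisphere_iff {C e : E} {R d : ℝ} (hR : 0 < R) (hC : ‖C‖ = R)
    (he : ‖e‖ = 1) (hd0 : 0 ≤ d) (hd : d ^ 2 ≤ 2 * R ^ 2) (hCe : 0 ≤ ⟪C, e⟫) :
    (∀ x : E, ‖x‖ = R → ‖x - C‖ ≤ d → 0 ≤ ⟪x, e⟫) ↔ d * √(1 - d ^ 2 / (4 * R ^ 2)) ≤ ⟪C, e⟫ := by
  have norm_smul_eq {x : E} (hx : ‖x‖ = R) : ‖R⁻¹ • x‖ = 1 := by
    rw [norm_smul, hx, norm_inv, Real.norm_of_nonneg hR.le, inv_mul_cancel₀ hR.ne']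
  have rescale : (∀ x : E, ‖x‖ = R → ‖x - C‖ ≤ d → 0 ≤ ⟪x, e⟫) ↔
      ∀ u : E, ‖u‖ = 1 → 1 - d ^ 2 / (2 * R ^ 2) ≤ ⟪u, R⁻¹ • C⟫ → 0 ≤ ⟪u, e⟫ := by
    constructor
    · intro h u hu hcap
      have hx : ‖R • u‖ = R := by rw [norm_smul, hu, mul_one, Real.norm_of_nonneg hR.le]
      rw [← inv_smul_smul₀ hR.ne' u] at hcap
      have := h (R • u) hx ((norm_sub_le_iff_le_inner_inv_smul hR hx hC hd0).2 hcap)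
      exact nonneg_of_mul_nonneg_right (by rwa [real_inner_smul_left] at this) hR
    · intro h x hx hcap
      have := h _ (norm_smul_eq hx) ((norm_sub_le_iff_le_inner_inv_smul hR hx hC hd0).1 hcap)
      rw [real_inner_smul_left] at this
      exact nonneg_of_mul_nonneg_right this (inv_pos.2 hR)
  have ha : 0 ≤ 1 - d ^ 2 / (2 * R ^ 2) := by
    rw [sub_nonneg, div_le_one (by positivity)]; exact hd
  rw [rescale, forall_inner_nonneg_iff_one_le_sq_add_sq (norm_smul_eq hC) he ha
    (by rw [real_inner_smul_left]; positivity), real_inner_smul_left, mul_sqrt_one_sub_div_le_iff hR hd0 hCe]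

end

theorem stmt_12 (N : ℕ) (hN : 2 ≤ N) (R : ℝ) (hR : 0 < R)
    (d : ℝ) (hd0 : 0 < d) (hd : d ≤ Real.sqrt 2 * R)
    (C : EuclideanSpace ℝ (Fin N)) (hC : ‖C‖ = R)
    (c : ℝ) (hc : C ⟨N - 1, by omega⟩ = c) (hc0 : 0 ≤ c) :
    ({x : EuclideanSpace ℝ (Fin N) | ‖x‖ = R ∧ ‖x - C‖ ≤ d}
        ⊆ {x : EuclideanSpace ℝ (Fin N) | 0 ≤ x ⟨N - 1, by omega⟩})
      ↔ d * Real.sqrt (1 - d ^ 2 / (4 * R ^ 2)) ≤ c := by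
  set i : Fin N := ⟨N - 1, by omega⟩
  have inner_single (x : EuclideanSpace ℝ (Fin N)) : ⟪x, EuclideanSpace.single i 1⟫ = x i := by
    simp [EuclideanSpace.inner_single_right]
  have hd2 : d ^ 2 ≤ 2 * R ^ 2 := by
    calc d ^ 2 ≤ (√2 * R) ^ 2 := pow_le_pow_left₀ hd0.le hd 2
      _ = 2 * R ^ 2 := by rw [mul_pow, Real.sq_sqrt zero_le_two]
  have key := sphere_cap_subset_hemisphere_iff (e := EuclideanSpace.single i 1) hR hC
    (by rw [PiLp.norm_single, norm_one]) hd0.le hd2 (by rwa [inner_single, hc])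
  simp only [inner_single, hc] at key
  simpa only [Set.ofPred_subset_ofPred, and_imp] using key
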